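/- Let X be a compact metric space and f_{0,∞} a sequence of continuous self-maps. For 0 ≤ i ≤ j, the supremum topological sequence entropy of the shifted system (X, f_{i,∞}) is at most that of (X, f_{j,∞}): h*(f_{i,∞}) ≤ h*(f_{j,∞}). -/

import Mathlib

open Filter Set MeasureTheory

/-- `nacomp f i n = f (i+n-1) ∘ ⋯ ∘ f i`, the `n`-fold composition of the
nonautonomous system starting at index `i`. -/
def nacomp {X : Type*} (f : ℕ → X → X) (i : ℕ) : ℕ → X → X
  | 0 => id
  | n + 1 => f (i + n) ∘ nacomp f i n

/-- `E` is an `(n, ε, A)`-separated subset of `Λ` for the nonautonomous system `f`. -/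
def IsSepSet {X : Type*} [PseudoMetricSpace X] (f : ℕ → X → X) (A : ℕ → ℕ) (n : ℕ)
    (ε : ℝ) (Λ : Set X) (E : Finset X) : Prop :=
  ↑E ⊆ Λ ∧ ∀ x ∈ E, ∀ y ∈ E, x ≠ y →
    ∃ j : Fin n, ε < dist (nacomp f 0 (A j) x) (nacomp f 0 (A j) y)

/-- `s_n(ε, A, f, Λ)`: maximal cardinality of an `(n,ε,A)`-separated subset of `Λ`. -/
noncomputable def maxSep {X : Type*} [PseudoMetricSpace X] (f : ℕ → X → X) (A : ℕ → ℕ)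
    (n : ℕ) (ε : ℝ) (Λ : Set X) : ℕ :=
  sSup {m | ∃ E : Finset X, IsSepSet f A n ε Λ E ∧ E.card = m}

/-- Topological sequence entropy of `f` on `Λ` along `A`, via separated sets:
`lim_{ε → 0} limsup_n (1/n) log s_n(ε,A,f,Λ)`, the limit realized as a supremum over `ε > 0`. -/
noncomputable def sepEnt {X : Type*} [PseudoMetricSpace X] (f : ℕ → X → X) (A : ℕ → ℕ)
    (Λ : Set X) : EReal :=
  ⨆ ε : {ε : ℝ // 0 < ε},
    limsup (fun n : ℕ => ((Real.log (maxSep f A n ε Λ) / n : ℝ) : EReal)) atTop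

/-- A finite open cover of the whole space. -/
def IsFinOpenCover {X : Type*} [TopologicalSpace X] (𝒜 : Finset (Set X)) : Prop :=
  (∀ u ∈ 𝒜, IsOpen u) ∧ ⋃₀ ↑𝒜 = (univ : Set X)

/-- A cell `⋂_j (f_0^{a_j})⁻¹ (u j)` of the join `⋁_{j} f_0^{-a_j} 𝒜`. -/
def seqCell {X : Type*} (f : ℕ → X → X) (A : ℕ → ℕ) (n : ℕ) (u : Fin n → Set X) : Set X :=
  ⋂ j : Fin n, nacomp f 0 (A j.1) ⁻¹' (u j)

/-- `N((⋁_{j=1}^n f_0^{-a_j} 𝒜)|_Λ)`: the minimal cardinality of a subfamily of the join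
cover whose union contains `Λ`. -/
noncomputable def coverN {X : Type*} (f : ℕ → X → X) (A : ℕ → ℕ) (n : ℕ) (Λ : Set X)
    (𝒜 : Finset (Set X)) : ℕ :=
  sInf {m | ∃ S : Finset (Fin n → Set X), (∀ u ∈ S, ∀ j, u j ∈ 𝒜) ∧
    (Λ ⊆ ⋃ u ∈ S, seqCell f A n u) ∧ S.card = m}

/-- `h_A(f, Λ, 𝒜)`, the sequence entropy of `f` on `Λ` relative to the open cover `𝒜`. -/
noncomputable def coverEntOf {X : Type*} (f : ℕ → X → X) (A : ℕ → ℕ) (Λ : Set X)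
    (𝒜 : Finset (Set X)) : EReal :=
  limsup (fun n : ℕ => ((Real.log (coverN f A n Λ 𝒜) / n : ℝ) : EReal)) atTop

/-- `h_A(f, Λ)`: topological sequence entropy via open covers. -/
noncomputable def coverEnt {X : Type*} [TopologicalSpace X] (f : ℕ → X → X) (A : ℕ → ℕ)
    (Λ : Set X) : EReal :=
  ⨆ 𝒜 : {𝒜 : Finset (Set X) // IsFinOpenCover 𝒜}, coverEntOf f A Λ 𝒜

/-- The supremum topological sequence entropy `h*(f) = sup_A h_A(f)`. -/
noncomputable def supSeqEnt {X : Type*} [PseudoMetricSpace X] (f : ℕ → X → X) : EReal :=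
  ⨆ A : {A : ℕ → ℕ // StrictMono A}, sepEnt f A univ

/-- The `n`-th compositions system `f_{0,∞}^n`, whose `k`-th map is `f_{kn}^n`. -/
def compSys {X : Type*} (f : ℕ → X → X) (n : ℕ) : ℕ → X → X :=
  fun k => nacomp f (k * n) n

/-- A finite measurable partition of the space. -/
def IsFinMeasPartition {X : Type*} [MeasurableSpace X] (P : Finset (Set X)) : Prop :=
  (∀ s ∈ P, MeasurableSet s) ∧ ((P : Set (Set X)).PairwiseDisjoint id) ∧
    ⋃₀ ↑P = (univ : Set X)

/-- `h_{A,μ}(f, P) = limsup (1/n) H_μ(⋁_{j=1}^n f_0^{-a_j} P)`. -/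
noncomputable def measSeqEntPart {X : Type*} [MeasurableSpace X] (μ : Measure X)
    (f : ℕ → X → X) (A : ℕ → ℕ) (P : Finset (Set X)) : EReal :=
  limsup (fun n : ℕ =>
    (((∑ u : Fin n → {s // s ∈ P},
        Real.negMulLog (μ (seqCell f A n (fun j => (u j : Set X)))).toReal) / n : ℝ) : EReal))
    atTop

/-- The measure-theoretic sequence entropy `h_{A,μ}(f)`. -/
noncomputable def measSeqEnt {X : Type*} [MeasurableSpace X] (μ : Measure X)
    (f : ℕ → X → X) (A : ℕ → ℕ) : EReal :=
  ⨆ P : {P : Finset (Set X) // IsFinMeasPartition P}, measSeqEntPart μ f A P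

/-- Covering dimension at most `d`: every finite open cover has a finite open refinement
of order at most `d + 1`. -/
def HasCovDimLE (X : Type*) [TopologicalSpace X] (d : ℕ) : Prop :=
  ∀ 𝒜 : Finset (Set X), IsFinOpenCover 𝒜 → ∃ ℬ : Finset (Set X), IsFinOpenCover ℬ ∧
    (∀ v ∈ ℬ, ∃ u ∈ 𝒜, v ⊆ u) ∧ ∀ x : X, ({v : Set X | v ∈ ℬ ∧ x ∈ v}).ncard ≤ d + 1

/-- The induced nonautonomous system `f̂` on the space of Borel probability measures,
carrying the Lévy–Prokhorov (Prohorov) metric: `f̂ n μ = (f n)_* μ`. -/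
noncomputable def inducedSys {X : Type*} [MeasurableSpace X] (f : ℕ → X → X)
    (hf : ∀ n, Measurable (f n)) :
    ℕ → LevyProkhorov (ProbabilityMeasure X) → LevyProkhorov (ProbabilityMeasure X) :=
  fun n μ => (LevyProkhorov.toMeasureEquiv (α := ProbabilityMeasure X)).symm
    (((LevyProkhorov.toMeasureEquiv (α := ProbabilityMeasure X)) μ).map (hf n).aemeasurable)

/-- Multi-sensitivity of a nonautonomous system. -/
def MultiSensitive {X : Type*} [PseudoMetricSpace X] (f : ℕ → X → X) : Prop :=
  ∃ δ : ℝ, 0 < δ ∧ ∀ (k : ℕ) (V : Fin k → Set X),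
    (∀ i, IsOpen (V i)) → (∀ i, (V i).Nonempty) →
      ∃ n : ℕ, 1 ≤ n ∧ ∀ i, δ < Metric.diam (nacomp f 0 n '' V i)

/-!
It suffices to shift by one index. Split an `(n+1, ε)`-separated set of `f_{0,∞}` along `A`
into the boundedly many classes of an `ε`-cover of `X`, read at time `a_0`. Two points in the
same class are `ε`-separated at a later time `a_k`, so `f_0` maps the class injectively onto an
`(n, ε)`-separated set of `f_{1,∞}` along `a_{k+1} - 1`. Hence
`s_{n+1}(ε, A, f_{0,∞}) ≤ C · s_n(ε, A', f_{1,∞})`, and the constant `C` does not affect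
exponential growth rates.
-/

open Topology

theorem nacomp_succ_eq_comp {X : Type*} (g : ℕ → X → X) (a : ℕ) :
    nacomp g 0 (a + 1) = nacomp (fun n => g (n + 1)) 0 a ∘ g 0 := by
  induction a with
  | zero => rfl
  | succ a ih =>
    change g (0 + (a + 1)) ∘ nacomp g 0 (a + 1) = g (0 + a + 1) ∘ nacomp _ 0 a ∘ g 0
    rw [ih, zero_add, zero_add]

theorem nacomp_strictMono_succ_apply {X : Type*} {f : ℕ → X → X} {A : ℕ → ℕ}
    (hA : StrictMono A) (k : ℕ) (x : X) :
    nacomp f 0 (A (k + 1)) x = nacomp (fun m => f (m + 1)) 0 (A (k + 1) - 1) (f 0 x) := by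
  have hsucc : A (k + 1) - 1 + 1 = A (k + 1) :=
    Nat.sub_add_cancel ((Nat.zero_le _).trans_lt (hA k.succ_pos))
  conv_lhs => rw [← hsucc, nacomp_succ_eq_comp]
  rfl

theorem exists_fin_classes_dist_lt {Y : Type*} [PseudoMetricSpace Y] [CompactSpace Y]
    {ε : ℝ} (hε : 0 < ε) : ∃ (N : ℕ) (c : Y → Fin N), ∀ y z, c y = c z → dist y z < ε := by
  obtain ⟨t, -, htf, hcov⟩ :=
    finite_cover_balls_of_compact (isCompact_univ (X := Y)) (half_pos hε)
  have hmem : ∀ y, ∃ x : t, y ∈ Metric.ball (x : Y) (ε / 2) := by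
    intro y
    simpa using hcov (mem_univ y)
  choose c hc using hmem
  have := htf.fintype
  refine ⟨Fintype.card t, Fintype.equivFin t ∘ c, fun y z hyz => ?_⟩
  have hcyz : c y = c z := (Fintype.equivFin t).injective hyz
  calc dist y z ≤ dist y (c y) + dist z (c z) := by rw [hcyz]; exact dist_triangle_right _ _ _
    _ < ε / 2 + ε / 2 := add_lt_add (hc y) (hc z)
    _ = ε := add_halves ε

section SeparatedSets

variable {X : Type*} [PseudoMetricSpace X] {f : ℕ → X → X} {A : ℕ → ℕ} {n : ℕ} {ε : ℝ}
  {Λ : Set X} {E : Finset X}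

theorem IsSepSet.mono {E' : Finset X} (hE : IsSepSet f A n ε Λ E) (hE' : E' ⊆ E) :
    IsSepSet f A n ε Λ E' :=
  ⟨(Finset.coe_subset.2 hE').trans hE.1, fun x hx y hy => hE.2 x (hE' hx) y (hE' hy)⟩

theorem bddAbove_card_isSepSet [CompactSpace X] (hε : 0 < ε) :
    BddAbove {m | ∃ E : Finset X, IsSepSet f A n ε Λ E ∧ E.card = m} := by
  obtain ⟨N, c, hc⟩ := exists_fin_classes_dist_lt (Y := Fin n → X) hε
  refine ⟨N, ?_⟩
  rintro _ ⟨E, ⟨-, hsep⟩, rfl⟩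
  have hinj : InjOn (fun x => c fun j => nacomp f 0 (A j) x) E := by
    intro x hx y hy hxy
    by_contra hne
    obtain ⟨j, hj⟩ := hsep x hx y hy hne
    exact hj.not_gt ((dist_le_pi_dist _ _ j).trans_lt (hc _ _ hxy))
  simpa using Finset.card_le_card_of_injOn _ (fun x _ => Finset.mem_univ _) hinj

theorem card_le_maxSep [CompactSpace X] (hε : 0 < ε) (hE : IsSepSet f A n ε Λ E) :
    E.card ≤ maxSep f A n ε Λ :=
  le_csSup (bddAbove_card_isSepSet hε) ⟨E, hE, rfl⟩

theorem maxSep_le {m : ℕ} (h : ∀ E : Finset X, IsSepSet f A n ε Λ E → E.card ≤ m) :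
    maxSep f A n ε Λ ≤ m :=
  csSup_le ⟨0, ∅, ⟨by simp, by simp⟩, rfl⟩ (by rintro _ ⟨E, hE, rfl⟩; exact h E hE)

theorem IsSepSet.card_le_maxSep_shift [CompactSpace X] (hA : StrictMono A) (hε : 0 < ε)
    (hE : IsSepSet f A (n + 1) ε univ E)
    (h0 : ∀ x ∈ E, ∀ y ∈ E, dist (nacomp f 0 (A 0) x) (nacomp f 0 (A 0) y) < ε) :
    E.card ≤ maxSep (fun m => f (m + 1)) (fun k => A (k + 1) - 1) n ε univ := by
  classical
  have hsep : ∀ x ∈ E, ∀ y ∈ E, x ≠ y → ∃ j : Fin n, ε <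
      dist (nacomp (fun m => f (m + 1)) 0 (A (j + 1) - 1) (f 0 x))
        (nacomp (fun m => f (m + 1)) 0 (A (j + 1) - 1) (f 0 y)) := by
    intro x hx y hy hxy
    obtain ⟨j, hj⟩ := hE.2 x hx y hy hxy
    cases j using Fin.cases with
    | zero => exact absurd (h0 x hx y hy) hj.not_gt
    | succ k => exact ⟨k, by simpa [nacomp_strictMono_succ_apply hA] using hj⟩
  have hinj : InjOn (f 0) E := by
    intro x hx y hy hxy
    by_contra hne
    obtain ⟨j, hj⟩ := hsep x hx y hy hne
    rw [hxy, dist_self] at hj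
    exact hj.not_gt hε
  rw [← Finset.card_image_of_injOn hinj]
  refine card_le_maxSep hε ⟨subset_univ _, ?_⟩
  simp only [Finset.forall_mem_image]
  exact fun x hx y hy hxy => hsep x hx y hy (fun h => hxy (h ▸ rfl))

theorem exists_maxSep_succ_le_mul [CompactSpace X] (hA : StrictMono A) (hε : 0 < ε) :
    ∃ C : ℕ, ∀ n, maxSep f A (n + 1) ε univ ≤
      C * maxSep (fun m => f (m + 1)) (fun k => A (k + 1) - 1) n ε univ := by
  classical
  obtain ⟨C, c, hc⟩ := exists_fin_classes_dist_lt (Y := X) hε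
  refine ⟨C, fun n => maxSep_le fun E hE => ?_⟩
  set cls : X → Fin C := fun x => c (nacomp f 0 (A 0) x)
  set M := maxSep (fun m => f (m + 1)) (fun k => A (k + 1) - 1) n ε univ
  have hfiber : ∀ b ∈ E.image cls, (E.filter fun x => cls x = b).card ≤ M := by
    intro b _
    refine (hE.mono (Finset.filter_subset _ _)).card_le_maxSep_shift hA hε ?_
    intro x hx y hy
    exact hc _ _ ((Finset.mem_filter.1 hx).2.trans (Finset.mem_filter.1 hy).2.symm)
  calc E.card ≤ M * (E.image cls).card := Finset.card_le_mul_card_image E M hfiber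
    _ ≤ M * C := by gcongr; simpa using Finset.card_le_univ (E.image cls)
    _ = C * M := mul_comm _ _

end SeparatedSets

theorem log_natCast_le_add_of_le_mul {a b c : ℕ} (h : a ≤ b * c) :
    Real.log a ≤ Real.log b + Real.log c := by
  rcases Nat.eq_zero_or_pos a with rfl | ha
  · simpa using add_nonneg (Real.log_natCast_nonneg b) (Real.log_natCast_nonneg c)
  have hbc : b * c ≠ 0 := by omega
  rw [← Real.log_mul (by exact_mod_cast left_ne_zero_of_mul hbc)
    (by exact_mod_cast right_ne_zero_of_mul hbc)]
  exact Real.log_le_log (by exact_mod_cast ha) (by exact_mod_cast h)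

theorem limsup_log_div_le_of_succ_le_mul (s t : ℕ → ℕ) (C : ℕ) (h : ∀ n, s (n + 1) ≤ C * t n) :
    limsup (fun n : ℕ => ((Real.log (s n) / n : ℝ) : EReal)) atTop ≤
      limsup (fun n : ℕ => ((Real.log (t n) / n : ℝ) : EReal)) atTop := by
  set e : ℕ → EReal := fun n => ((Real.log C / (n + 1) : ℝ) : EReal)
  set v : ℕ → EReal := fun n => ((Real.log (t n) / n : ℝ) : EReal)
  have he : limsup e atTop = 0 := by
    have hC : Tendsto (fun n : ℕ => Real.log C / ((n + 1 : ℕ) : ℝ)) atTop (𝓝 0) :=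
      (tendsto_const_div_atTop_nhds_zero_nat _).comp (tendsto_add_atTop_nat 1)
    push_cast at hC
    exact (EReal.tendsto_coe.2 hC).limsup_eq
  have hle : ∀ᶠ n : ℕ in atTop,
      ((Real.log (s (n + 1)) / (n + 1 : ℕ) : ℝ) : EReal) ≤ (e + v) n := by
    filter_upwards [eventually_ge_atTop 1] with n hn
    rw [Pi.add_apply, ← EReal.coe_add, EReal.coe_le_coe_iff]
    have hlog := log_natCast_le_add_of_le_mul (h n)
    have ht := Real.log_natCast_nonneg (t n)
    have hn' : (0 : ℝ) < n := by exact_mod_cast hn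
    push_cast
    calc Real.log (s (n + 1)) / (n + 1) ≤ (Real.log C + Real.log (t n)) / (n + 1) := by gcongr
      _ = Real.log C / (n + 1) + Real.log (t n) / (n + 1) := add_div _ _ _
      _ ≤ Real.log C / (n + 1) + Real.log (t n) / n := by gcongr; linarith
  calc limsup (fun n : ℕ => ((Real.log (s n) / n : ℝ) : EReal)) atTop
      = limsup (fun n : ℕ => ((Real.log (s (n + 1)) / (n + 1 : ℕ) : ℝ) : EReal)) atTop :=
        (limsup_nat_add _ 1).symm
    _ ≤ limsup (e + v) atTop := limsup_le_limsup hle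
    _ ≤ limsup e atTop + limsup v atTop :=
        EReal.limsup_add_le (.inl (by simp [he])) (.inl (by simp [he]))
    _ = limsup v atTop := by rw [he, zero_add]

theorem sepEnt_univ_le_shift {X : Type*} [PseudoMetricSpace X] [CompactSpace X]
    (f : ℕ → X → X) {A : ℕ → ℕ} (hA : StrictMono A) :
    sepEnt f A univ ≤ sepEnt (fun m => f (m + 1)) (fun k => A (k + 1) - 1) univ :=
  iSup_mono fun ⟨_, hε⟩ => by
    obtain ⟨C, hC⟩ := exists_maxSep_succ_le_mul (f := f) hA hε
    exact limsup_log_div_le_of_succ_le_mul _ _ C hC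

theorem supSeqEnt_le_shift {X : Type*} [PseudoMetricSpace X] [CompactSpace X]
    (f : ℕ → X → X) : supSeqEnt f ≤ supSeqEnt (fun m => f (m + 1)) := by
  refine iSup_le fun ⟨A, hA⟩ => (sepEnt_univ_le_shift f hA).trans ?_
  have hB : StrictMono fun k => A (k + 1) - 1 := fun k l hkl => by
    have := hA (show k + 1 < l + 1 by omega)
    have := hA (show 0 < k + 1 by omega)
    simp only
    omega
  exact le_iSup (fun B : {B : ℕ → ℕ // StrictMono B} => sepEnt _ B.1 univ) ⟨_, hB⟩

theorem supSeqEnt_shift_mono_general {X : Type*} [MetricSpace X] [CompactSpace X]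
    (f : ℕ → X → X) (i j : ℕ) (hij : i ≤ j) :
    supSeqEnt (fun n => f (i + n)) ≤ supSeqEnt (fun n => f (j + n)) := by
  induction j, hij using Nat.le_induction with
  | base => exact le_rfl
  | succ k _ ih =>
    refine ih.trans ?_
    simpa only [add_assoc, add_comm 1] using supSeqEnt_le_shift fun n => f (k + n)

/-- The supremum topological sequence entropy of shifted systems is monotone:
`h*(f_{i,∞}) ≤ h*(f_{j,∞})` for `i ≤ j`. -/
theorem supSeqEnt_shift_mono {X : Type*} [MetricSpace X] [CompactSpace X]
    (f : ℕ → X → X) (hf : ∀ n, Continuous (f n)) (i j : ℕ) (hij : i ≤ j) :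
    supSeqEnt (fun n => f (i + n)) ≤ supSeqEnt (fun n => f (j + n)) :=
  supSeqEnt_shift_mono_general f i j hij
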